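/- Let f : X → (-∞,+∞] be a c-antiderivative of a multivalued mapping M : X ⇉ Y, and let S be a nonempty subset of dom(M). Then the lower envelope α_{[c,f|_S,M]}(x) := inf{ h(x) : h ∈ 𝒜_{[c,f|_S,M]} } itself belongs to 𝒜_{[c,f|_S,M]}; that is, α_{[c,f|_S,M]} is c-convex, is a c-antiderivative of M, and coincides with f on S. -/

import Mathlib

noncomputable section

open scoped Classical

variable {X Y : Type*}

/-- The `c`-transform of `f : X → EReal`, a function on `Y`:
`f^c(y) = sup_{x ∈ X} (c(x,y) - f(x))`. The `c`-transform of a function on `Y` is obtained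
by applying this to the swapped coupling `fun y x => c x y`. -/
def cTransform (c : X → Y → ℝ) (f : X → EReal) : Y → EReal :=
  fun y => ⨆ x, ((c x y : EReal) - f x)

/-- `f` is proper: it takes no value `-∞` (i.e. maps into `(-∞, +∞]`) and is finite somewhere. -/
def ProperFn (f : X → EReal) : Prop :=
  (∀ x, f x ≠ ⊥) ∧ ∃ x, f x ≠ ⊤

/-- `f` is `c`-convex: it is proper and is the `c`-transform of some proper
`g : Y → (-∞, +∞]`. -/
def IsCConvex (c : X → Y → ℝ) (f : X → EReal) : Prop :=
  ProperFn f ∧ ∃ g : Y → EReal, ProperFn g ∧ f = cTransform (fun y x => c x y) g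

/-- The `c`-subdifferential of `f`:
`∂_c f(x) = { y | ∀ x', f(x) + c(x',y) ≤ f(x') + c(x,y) }`. -/
def cSubdiff (c : X → Y → ℝ) (f : X → EReal) (x : X) : Set Y :=
  { y | ∀ x', f x + (c x' y : EReal) ≤ f x' + (c x y : EReal) }

/-- The domain of a multivalued mapping `M : X ⇉ Y`. -/
def mapDom (M : X → Set Y) : Set X := { x | (M x).Nonempty }

/-- The inverse multivalued mapping `M⁻¹ : Y ⇉ X`. -/
def mapInv (M : X → Set Y) : Y → Set X := fun y => { x | y ∈ M x }

/-- The image `M(S) = ⋃_{s ∈ S} M(s)` of a set `S` under a multivalued mapping. -/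
def mapImageOn (M : X → Set Y) (S : Set X) : Set Y := { y | ∃ s ∈ S, y ∈ M s }

/-- The image `Im(M) = ⋃_{x ∈ X} M(x)` of a multivalued mapping. -/
def mapIm (M : X → Set Y) : Set Y := { y | ∃ x, y ∈ M x }

/-- `f` is a `c`-antiderivative of `M`: `f` is proper and `G(M) ⊆ G(∂_c f)`. -/
def IsCAntiderivative (c : X → Y → ℝ) (f : X → EReal) (M : X → Set Y) : Prop :=
  ProperFn f ∧ ∀ x y, y ∈ M x → y ∈ cSubdiff c f x

/-- The family `𝒜_{[c, f|_S, M]}` of all `c`-convex `c`-antiderivatives of `M`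
which coincide with `f` on `S`. -/
def cFamily (c : X → Y → ℝ) (f : X → EReal) (S : Set X) (M : X → Set Y) :
    Set (X → EReal) :=
  { h | IsCConvex c h ∧ (∀ x y, y ∈ M x → y ∈ cSubdiff c h x) ∧ ∀ s ∈ S, h s = f s }

/-- The upper envelope `γ_{[c, f|_S, M]}`. -/
def upperEnv (c : X → Y → ℝ) (f : X → EReal) (S : Set X) (M : X → Set Y) : X → EReal :=
  fun x => ⨆ h ∈ cFamily c f S M, h x

/-- The lower envelope `α_{[c, f|_S, M]}`. -/
def lowerEnv (c : X → Y → ℝ) (f : X → EReal) (S : Set X) (M : X → Set Y) : X → EReal :=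
  fun x => ⨅ h ∈ cFamily c f S M, h x

/-- The indicator function `ι_A` (0 on `A`, `+∞` off `A`). -/
def indicatorE (A : Set X) : X → EReal := fun x => if x ∈ A then 0 else ⊤

/-- Rockafellar's function `R_{[c,M,s]}`: the supremum over `n ≥ 1` and chains
`x_1 = s`, `x_{n+1} = x`, `{(x_i, y_i)}_{i=1}^n ⊆ G(M)` of
`Σ_{i=1}^n [c(x_{i+1}, y_i) - c(x_i, y_i)]` (0-indexed below). -/
def rockafellar (c : X → Y → ℝ) (M : X → Set Y) (s : X) : X → EReal := fun x =>
  ⨆ (n : ℕ) (_ : 0 < n) (xs : ℕ → X) (ys : ℕ → Y)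
      (_ : xs 0 = s ∧ ∀ i < n, ys i ∈ M (xs i)),
    (((∑ i ∈ Finset.range n,
        (c (if i + 1 < n then xs (i + 1) else x) (ys i) - c (xs i) (ys i))) : ℝ) : EReal)

/-- `M` is cyclically monotone of order `n` with respect to `c`: for any `n` pairs
`{(x_i, y_i)}_{i=1}^n ⊆ G(M)`, setting `x_{n+1} = x_1`,
`0 ≤ Σ_{i=1}^n [c(x_i,y_i) - c(x_{i+1},y_i)]` (0-indexed below, cyclically). -/
def IsNCMonotone (c : X → Y → ℝ) (M : X → Set Y) (n : ℕ) : Prop :=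
  ∀ (xs : ℕ → X) (ys : ℕ → Y), (∀ i < n, ys i ∈ M (xs i)) →
    0 ≤ ∑ i ∈ Finset.range n, (c (xs i) (ys i) - c (xs ((i + 1) % n)) (ys i))

/-- `M` is `c`-cyclically monotone: `n`-`c`-monotone for all `n`. -/
def IsCCyclicallyMonotone (c : X → Y → ℝ) (M : X → Set Y) : Prop :=
  ∀ n : ℕ, IsNCMonotone c M n

/-!
The double `c`-transform `f^{cc}` (`cBiconj c f`) never exceeds `f`, and it agrees with `f` wherever `f` is finite
and has a `c`-subgradient `y`: there `f^c(y) = c(x,y) - f(x)` is finite and `x` is a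
`c`-subgradient of `f^c` at `y`. Applying this to a `c`-antiderivative `f` of `M` shows that
`f^{cc}` belongs to `𝒜_{[c,f|_S,M]}`. An infimum of functions sharing a `c`-subgradient at `x`
still has it, so the lower envelope `α` is a `c`-antiderivative of `M` equal to `f` on `S`;
hence `α^{cc} ∈ 𝒜_{[c,f|_S,M]}`, which forces `α ≤ α^{cc} ≤ α`, so `α` is `c`-convex.
-/

lemma EReal.add_coe_le_add_coe_iff {a b : EReal} {p q : ℝ} :
    a + p ≤ b + q ↔ a + ((p - q : ℝ) : EReal) ≤ b := by
  conv_rhs => rw [← (EReal.addLECancellable_coe q).add_le_add_iff_right]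
  rw [add_assoc, ← EReal.coe_add, _root_.sub_add_cancel]

lemma EReal.coe_sub_coe_sub_le (r : ℝ) (a : EReal) : (r : EReal) - (r - a) ≤ a := by
  induction a using EReal.rec with
  | bot => simp
  | coe t => norm_cast; simp
  | top => exact le_top

def cBiconj (c : X → Y → ℝ) (f : X → EReal) : X → EReal :=
  cTransform (fun y x => c x y) (cTransform c f)

section CTransform

variable {c : X → Y → ℝ} {f : X → EReal} {x : X} {y : Y} {t : ℝ}

lemma mem_cSubdiff_iff :
    y ∈ cSubdiff c f x ↔ ∀ x', f x + ((c x' y - c x y : ℝ) : EReal) ≤ f x' :=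
  forall_congr' fun _ => EReal.add_coe_le_add_coe_iff

lemma le_cTransform (f : X → EReal) (x : X) (y : Y) : (c x y : EReal) - f x ≤ cTransform c f y :=
  le_iSup (fun x' => (c x' y : EReal) - f x') x

lemma cBiconj_le (c : X → Y → ℝ) (f : X → EReal) (x : X) : cBiconj c f x ≤ f x :=
  iSup_le fun y => (EReal.sub_le_sub le_rfl (le_cTransform f x y)).trans
    (EReal.coe_sub_coe_sub_le _ _)

lemma cTransform_eq_of_mem_cSubdiff (hy : y ∈ cSubdiff c f x) (hx : f x = t) :
    cTransform c f y = ((c x y - t : ℝ) : EReal) := by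
  refine le_antisymm (iSup_le fun x' => ?_) (by simpa [hx] using le_cTransform f x y)
  have h := mem_cSubdiff_iff.1 hy x'
  rw [hx, ← EReal.coe_add] at h
  calc (c x' y : EReal) - f x'
      ≤ (c x' y : EReal) - ((t + (c x' y - c x y) : ℝ) : EReal) := EReal.sub_le_sub le_rfl h
    _ = ((c x y - t : ℝ) : EReal) := by norm_cast; ring_nf

lemma mem_cSubdiff_cTransform (hy : y ∈ cSubdiff c f x) (hx : f x = t) :
    x ∈ cSubdiff (fun y x => c x y) (cTransform c f) y := by
  intro y'
  rw [cTransform_eq_of_mem_cSubdiff hy hx]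
  calc ((c x y - t : ℝ) : EReal) + (c x y' : EReal)
      = ((c x y' - t : ℝ) : EReal) + (c x y : EReal) := by norm_cast; ring_nf
    _ ≤ cTransform c f y' + (c x y : EReal) := by
      gcongr
      simpa [hx] using le_cTransform f x y'

lemma cBiconj_eq_of_mem_cSubdiff (hy : y ∈ cSubdiff c f x) (hx : f x = t) :
    cBiconj c f x = t := by
  rw [cBiconj, cTransform_eq_of_mem_cSubdiff (mem_cSubdiff_cTransform hy hx)
    (cTransform_eq_of_mem_cSubdiff hy hx)]
  norm_cast
  ring

lemma mem_cSubdiff_cBiconj (hy : y ∈ cSubdiff c f x) (hx : f x = t) :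
    y ∈ cSubdiff c (cBiconj c f) x :=
  mem_cSubdiff_cTransform (mem_cSubdiff_cTransform hy hx) (cTransform_eq_of_mem_cSubdiff hy hx)

lemma properFn_of_mem_cSubdiff (hy : y ∈ cSubdiff c f x) (hx : f x = t) : ProperFn f := by
  refine ⟨fun x' hbot => ?_, x, hx ▸ EReal.coe_ne_top t⟩
  have h := hy x'
  rw [hx, hbot, EReal.bot_add, le_bot_iff, ← EReal.coe_add] at h
  exact EReal.coe_ne_bot _ h

lemma isCConvex_cBiconj (hy : y ∈ cSubdiff c f x) (hx : f x = t) : IsCConvex c (cBiconj c f) :=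
  ⟨properFn_of_mem_cSubdiff (mem_cSubdiff_cBiconj hy hx) (cBiconj_eq_of_mem_cSubdiff hy hx),
    cTransform c f,
    properFn_of_mem_cSubdiff (mem_cSubdiff_cTransform hy hx) (cTransform_eq_of_mem_cSubdiff hy hx),
    rfl⟩

lemma ProperFn.exists_eq_coe_of_mem_cSubdiff (hf : ProperFn f) (hy : y ∈ cSubdiff c f x) :
    ∃ t : ℝ, f x = t := by
  obtain ⟨x₀, hx₀⟩ := hf.2
  have htop : f x ≠ ⊤ := fun htop => by
    have h := hy x₀
    rw [htop, EReal.top_add_coe, top_le_iff] at h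
    exact EReal.add_ne_top hx₀ (EReal.coe_ne_top _) h
  exact ⟨(f x).toReal, (EReal.coe_toReal htop (hf.1 x)).symm⟩

lemma mem_cSubdiff_iInf {F : Set (X → EReal)} (h : ∀ g ∈ F, y ∈ cSubdiff c g x) :
    y ∈ cSubdiff c (fun z => ⨅ g ∈ F, g z) x :=
  mem_cSubdiff_iff.2 fun x' => le_iInf₂ fun g hg =>
    (add_le_add_left (iInf₂_le g hg) _).trans (mem_cSubdiff_iff.1 (h g hg) x')

end CTransform

section Envelope

variable {c : X → Y → ℝ} {f : X → EReal} {S : Set X} {M : X → Set Y}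

lemma IsCAntiderivative.cBiconj_eq (hf : IsCAntiderivative c f M) {x : X} (hx : x ∈ mapDom M) :
    cBiconj c f x = f x := by
  obtain ⟨y, hy⟩ := hx
  obtain ⟨t, ht⟩ := hf.1.exists_eq_coe_of_mem_cSubdiff (hf.2 x y hy)
  rw [cBiconj_eq_of_mem_cSubdiff (hf.2 x y hy) ht, ht]

lemma IsCAntiderivative.cBiconj_mem_cFamily (hf : IsCAntiderivative c f M)
    (hS : S ⊆ mapDom M) {x₀ : X} (hx₀ : x₀ ∈ mapDom M) : cBiconj c f ∈ cFamily c f S M := by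
  refine ⟨?_, fun x y hy => ?_, fun s hs => hf.cBiconj_eq (hS hs)⟩
  · obtain ⟨y₀, hy₀⟩ := hx₀
    obtain ⟨t, ht⟩ := hf.1.exists_eq_coe_of_mem_cSubdiff (hf.2 x₀ y₀ hy₀)
    exact isCConvex_cBiconj (hf.2 x₀ y₀ hy₀) ht
  · obtain ⟨t, ht⟩ := hf.1.exists_eq_coe_of_mem_cSubdiff (hf.2 x y hy)
    exact mem_cSubdiff_cBiconj (hf.2 x y hy) ht

lemma cFamily_congr {g : X → EReal} (h : ∀ s ∈ S, f s = g s) :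
    cFamily c f S M = cFamily c g S M := by
  ext k
  simp only [cFamily, Set.mem_ofPred_eq]
  exact and_congr_right' (and_congr_right' (forall₂_congr fun s hs => by rw [h s hs]))

lemma lowerEnv_le {h : X → EReal} (hh : h ∈ cFamily c f S M) (x : X) :
    lowerEnv c f S M x ≤ h x :=
  iInf₂_le h hh

lemma IsCAntiderivative.lowerEnv_eq (hf : IsCAntiderivative c f M) (hS : S ⊆ mapDom M)
    {s : X} (hs : s ∈ S) : lowerEnv c f S M s = f s :=
  le_antisymm ((lowerEnv_le (hf.cBiconj_mem_cFamily hS (hS hs)) s).trans (cBiconj_le c f s))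
    (le_iInf₂ fun _ hh => (hh.2.2 s hs).ge)

end Envelope

theorem statement2_general (c : X → Y → ℝ) (f : X → EReal)
    (M : X → Set Y) (hf : IsCAntiderivative c f M)
    (S : Set X) (hS : S.Nonempty) (hSdom : S ⊆ mapDom M) :
    lowerEnv c f S M ∈ cFamily c f S M := by
  obtain ⟨s, hs⟩ := hS
  obtain ⟨y, hy⟩ := hSdom hs
  obtain ⟨t, ht⟩ := hf.1.exists_eq_coe_of_mem_cSubdiff (hf.2 s y hy)
  set α := lowerEnv c f S M
  have hαS : ∀ s ∈ S, α s = f s := fun s hs => hf.lowerEnv_eq hSdom hs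
  have hαM : ∀ x y, y ∈ M x → y ∈ cSubdiff c α x := fun x y hxy =>
    mem_cSubdiff_iInf fun _ hh => hh.2.1 x y hxy
  have hα : IsCAntiderivative c α M :=
    ⟨properFn_of_mem_cSubdiff (hαM s y hy) ((hαS s hs).trans ht), hαM⟩
  have hαcc : cBiconj c α ∈ cFamily c f S M :=
    cFamily_congr hαS ▸ hα.cBiconj_mem_cFamily hSdom (hSdom hs)
  have hα_eq : cBiconj c α = α :=
    funext fun x => le_antisymm (cBiconj_le c α x) (lowerEnv_le hαcc x)
  exact ⟨hα_eq ▸ hαcc.1, hαM, hαS⟩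

/-- The lower envelope `α_{[c, f|_S, M]}` belongs to `𝒜_{[c, f|_S, M]}`. -/
theorem statement2 [Nonempty X] [Nonempty Y] (c : X → Y → ℝ) (f : X → EReal)
    (M : X → Set Y) (hf : IsCAntiderivative c f M)
    (S : Set X) (hS : S.Nonempty) (hSdom : S ⊆ mapDom M) :
    lowerEnv c f S M ∈ cFamily c f S M :=
  statement2_general c f M hf S hS hSdom
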